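/- arXiv:math/0202191 — 4 statements merged into one kernel-verified Lean document; each statement's English description precedes it below -/
import Mathlib

section
/- For every integer D ≥ 1 and every real N ≥ 0, the cardinality ε_{D,N} of the set E_{D,N} = {α algebraic : [ℚ(α):ℚ] ≤ D and h(α) ≤ N} satisfies ε_{D,N} ≤ e^{D(D+1)(N+1)}. -/
/-!
An algebraic number `α` of degree `d ≤ D` and height at most `N` is a root of
`P = a · minpoly ℚ α · X ^ (D - d) ∈ ℤ[X]`, where `a` is the denominator of `minpoly ℚ α`.
This `P` has degree exactly `D`, leading coefficient `a ≥ 1` and Mahler measure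
`M(α) ≤ B := exp (D N)`, so Mignotte's bound `|Pᵢ| ≤ (D choose i) M(P)` puts it in a box holding
at most `B · (3 · 2 ^ D · B) ^ D` integer polynomials, each with at most `D` roots. Hence
`#E ≤ D · 3 ^ D · 2 ^ (D²) · B ^ (D + 1)`, and `D · 3 ^ D · 2 ^ (D²) ≤ exp (D (D + 1))`.
-/

open Polynomial

/-- The positive leading coefficient of the primitive integer minimal polynomial of `α`:
the least positive integer `n` such that `n • minpoly ℚ α` has integer coefficients. -/
noncomputable def algDenom (α : ℂ) : ℕ :=
  sInf {n : ℕ | 0 < n ∧ ∃ q : Polynomial ℤ,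
    q.map (Int.castRingHom ℚ) = (n : ℚ) • minpoly ℚ α}

/-- The Mahler measure of (the integer minimal polynomial of) the algebraic number `α`. -/
noncomputable def mahlerMeasure (α : ℂ) : ℝ :=
  (algDenom α : ℝ) *
    (((minpoly ℚ α).map (algebraMap ℚ ℂ)).roots.map
      (fun z => max 1 ‖z‖)).prod

/-- The degree of an algebraic number `α` over `ℚ`. -/
noncomputable def degAlg (α : ℂ) : ℕ := (minpoly ℚ α).natDegree

/-- The absolute logarithmic Weil height of an algebraic number `α`. -/
noncomputable def height (α : ℂ) : ℝ :=
  (1 / (degAlg α : ℝ)) * Real.log (mahlerMeasure α)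

/-- The set of algebraic numbers of degree at most `D` and height at most `N`. -/
def setE (D : ℕ) (N : ℝ) : Set ℂ :=
  {α : ℂ | IsAlgebraic ℚ α ∧ degAlg α ≤ D ∧ height α ≤ N}

namespace Polynomial

theorem ncard_le_mul_ncard_of_forall_mem_roots {R K : Type*} [CommRing R] [CommRing K]
    [IsDomain K] (f : R →+* K) {s : Set K} {P : Set R[X]} (hP : P.Finite) {n : ℕ}
    (hdeg : ∀ p ∈ P, p.natDegree ≤ n) (hroot : ∀ x ∈ s, ∃ p ∈ P, x ∈ (p.map f).roots) :
    s.ncard ≤ n * P.ncard := by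
  classical
  have hsub : s ⊆ ⋃ p ∈ hP.toFinset, ((p.map f).roots.toFinset : Set K) := by
    intro x hx
    obtain ⟨p, hp, hx⟩ := hroot x hx
    exact Set.mem_biUnion (hP.mem_toFinset.mpr hp) (by simpa using hx)
  calc s.ncard ≤ (⋃ p ∈ hP.toFinset, ((p.map f).roots.toFinset : Set K)).ncard :=
        Set.ncard_le_ncard hsub (Set.toFinite _)
    _ ≤ ∑ p ∈ hP.toFinset, ((p.map f).roots.toFinset : Set K).ncard :=
        hP.toFinset.set_ncard_biUnion_le _
    _ ≤ ∑ _p ∈ hP.toFinset, n := Finset.sum_le_sum fun p hp => by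
        rw [Set.ncard_coe_finset]
        exact (Multiset.toFinset_card_le _).trans <| (card_roots' _).trans <|
          natDegree_map_le.trans (hdeg p (hP.mem_toFinset.mp hp))
    _ = n * P.ncard := by
        rw [Finset.sum_const, smul_eq_mul, mul_comm, Set.ncard_eq_toFinset_card P hP]

theorem mahlerMeasure_mul_X_pow (p : ℂ[X]) (k : ℕ) :
    (p * X ^ k).mahlerMeasure = p.mahlerMeasure := by
  simp [mahlerMeasure_mul, mahlerMeasure_eq_leadingCoeff_mul_prod_roots (X ^ k),
    Multiset.map_nsmul, Multiset.prod_nsmul]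

variable (D : ℕ) (B : ℝ)

/-- Integer polynomials of degree at most `D` with `|aᵢ| ≤ (D choose i) B` and `a_D ≥ 1`. -/
def mahlerBox : Set ℤ[X] :=
  boxPoly D (fun i => if i = Fin.last D then 1 else -(D.choose i * B)) (fun i => D.choose i * B)

theorem ncard_mahlerBox (hB : 0 ≤ B) :
    (mahlerBox D B).ncard = ⌊B⌋₊ * ∏ i : Fin D, (2 * ⌊D.choose i * B⌋₊ + 1) := by
  rw [mahlerBox, ncard_boxPoly, Fin.prod_univ_castSucc, mul_comm]
  have hcast (i : Fin D) : (⌊(D.choose i : ℝ) * B⌋ - ⌈-((D.choose i : ℝ) * B)⌉ + 1).toNat =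
      2 * ⌊D.choose i * B⌋₊ + 1 := by
    rw [Int.ceil_neg, ← Int.natCast_floor_eq_floor (by positivity)]
    omega
  simp [Fin.castSucc_ne_last, hcast, Int.floor_toNat]

variable {D B}

theorem finite_mahlerBox (hB : 1 ≤ B) : (mahlerBox D B).Finite := by
  refine Set.finite_of_ncard_ne_zero ?_
  rw [ncard_mahlerBox D B (by linarith)]
  exact mul_ne_zero (Nat.floor_pos.mpr hB).ne' (Finset.prod_ne_zero_iff.mpr fun _ _ => by omega)

theorem ncard_mahlerBox_le (hB : 1 ≤ B) :
    ((mahlerBox D B).ncard : ℝ) ≤ 3 ^ D * 2 ^ (D * D) * B ^ (D + 1) := by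
  have hfactor (i : Fin D) : ((2 * ⌊D.choose i * B⌋₊ + 1 : ℕ) : ℝ) ≤ 3 * 2 ^ D * B := by
    have hchoose : (D.choose i : ℝ) ≤ 2 ^ D := by exact_mod_cast Nat.choose_le_two_pow D i
    have hfloor : (⌊D.choose i * B⌋₊ : ℝ) ≤ D.choose i * B := Nat.floor_le (by positivity)
    have htwo : (1 : ℝ) ≤ 2 ^ D := one_le_pow₀ (by norm_num)
    push_cast
    nlinarith
  calc ((mahlerBox D B).ncard : ℝ)
      = ⌊B⌋₊ * ∏ i : Fin D, ((2 * ⌊D.choose i * B⌋₊ + 1 : ℕ) : ℝ) := by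
        rw [ncard_mahlerBox D B (by linarith)]; push_cast; rfl
    _ ≤ B * ∏ _i : Fin D, (3 * 2 ^ D * B) := by
        gcongr with i
        · exact Nat.floor_le (by linarith)
        · exact hfactor i
    _ = 3 ^ D * 2 ^ (D * D) * B ^ (D + 1) := by
        rw [Finset.prod_const, Finset.card_univ, Fintype.card_fin, mul_pow, mul_pow, ← pow_mul]
        ring

theorem mem_mahlerBox {p : ℤ[X]} (hdeg : p.natDegree = D) (hlc : 0 < p.leadingCoeff)
    (hM : (p.map (Int.castRingHom ℂ)).mahlerMeasure ≤ B) : p ∈ mahlerBox D B := by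
  refine ⟨hdeg.le, fun i => ?_⟩
  have hcoeff : |(p.coeff i : ℝ)| ≤ D.choose i * B := by
    have h := norm_coeff_le_choose_mul_mahlerMeasure i (p.map (Int.castRingHom ℂ))
    rw [natDegree_map_eq_of_injective (RingHom.injective_int _), hdeg, coeff_map,
      eq_intCast, Complex.norm_intCast] at h
    exact h.trans (by gcongr)
  refine ⟨?_, (le_abs_self _).trans hcoeff⟩
  dsimp only
  split_ifs with hi
  · subst hi
    rw [Fin.val_last, ← hdeg, coeff_natDegree]
    exact_mod_cast hlc
  · exact neg_le_of_abs_le hcoeff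

end Polynomial

theorem natCast_mul_three_pow_mul_two_pow_le_exp (D : ℕ) :
    (D : ℝ) * 3 ^ D * 2 ^ (D * D) ≤ Real.exp (D * (D + 1)) := by
  have hD : (D : ℝ) ≤ Real.exp (D - 1) := by linarith [Real.add_one_le_exp ((D : ℝ) - 1)]
  have h3 : (3 : ℝ) = Real.exp (Real.log 3) := (Real.exp_log (by norm_num)).symm
  have h2 : (2 : ℝ) = Real.exp (Real.log 2) := (Real.exp_log (by norm_num)).symm
  calc (D : ℝ) * 3 ^ D * 2 ^ (D * D)
      ≤ Real.exp (D - 1) * Real.exp (Real.log 3) ^ D * Real.exp (Real.log 2) ^ (D * D) := by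
        rw [← h3, ← h2]; gcongr
    _ = Real.exp ((D - 1) + D * Real.log 3 + D * D * Real.log 2) := by
        rw [← Real.exp_nat_mul, ← Real.exp_nat_mul, ← Real.exp_add, ← Real.exp_add]
        push_cast; ring_nf
    _ ≤ Real.exp (D * (D + 1)) := by
        gcongr
        nlinarith [Real.log_three_lt_d9, Real.log_two_lt_d9, sq_nonneg ((D : ℝ) - 1.8)]

theorem algDenom_set_nonempty (α : ℂ) :
    {n : ℕ | 0 < n ∧ ∃ q : ℤ[X], q.map (Int.castRingHom ℚ) = (n : ℚ) • minpoly ℚ α}.Nonempty := by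
  obtain ⟨b, hb, hq⟩ :=
    IsLocalization.integerNormalization_spec (nonZeroDivisors ℤ) (minpoly ℚ α)
  -- `b` clears the denominators of `minpoly ℚ α`; `b ^ 2` does too and is positive.
  refine ⟨b.natAbs ^ 2, pow_pos (Int.natAbs_pos.mpr (nonZeroDivisors.ne_zero hb)) 2,
    C b * IsLocalization.integerNormalization (nonZeroDivisors ℤ) (minpoly ℚ α), ?_⟩
  rw [Polynomial.map_mul, ← algebraMap_int_eq, hq, map_C, ← smul_eq_C_mul,
    ← Int.cast_smul_eq_zsmul ℚ, smul_smul]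
  congr 1
  rw [eq_intCast, Nat.cast_pow, Nat.cast_natAbs, Int.cast_abs, sq_abs, sq]

theorem algDenom_spec (α : ℂ) : 0 < algDenom α ∧
    ∃ q : ℤ[X], q.map (Int.castRingHom ℚ) = (algDenom α : ℚ) • minpoly ℚ α :=
  Nat.sInf_mem (algDenom_set_nonempty α)

noncomputable def intMinPoly (α : ℂ) : ℤ[X] := (algDenom_spec α).2.choose

theorem map_intMinPoly (α : ℂ) : (intMinPoly α).map (Int.castRingHom ℂ) =
    C (algDenom α : ℂ) * (minpoly ℚ α).map (algebraMap ℚ ℂ) := by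
  rw [← RingHom.eq_intCast' ((algebraMap ℚ ℂ).comp (Int.castRingHom ℚ)), ← map_map,
    intMinPoly, (algDenom_spec α).2.choose_spec, smul_eq_C_mul, Polynomial.map_mul, map_C]
  rfl

theorem natDegree_intMinPoly (α : ℂ) : (intMinPoly α).natDegree = degAlg α := by
  rw [← natDegree_map_eq_of_injective (RingHom.injective_int (Int.castRingHom ℂ)),
    map_intMinPoly, natDegree_C_mul (by exact_mod_cast (algDenom_spec α).1.ne'), natDegree_map,
    degAlg]

section IsIntegral

variable {α : ℂ} (hα : IsIntegral ℚ α)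
include hα

theorem mahlerMeasure_map_intMinPoly :
    ((intMinPoly α).map (Int.castRingHom ℂ)).mahlerMeasure = _root_.mahlerMeasure α := by
  rw [map_intMinPoly, mahlerMeasure_mul, mahlerMeasure_const,
    mahlerMeasure_eq_leadingCoeff_mul_prod_roots, ((minpoly.monic hα).map _).leadingCoeff,
    _root_.mahlerMeasure, Complex.norm_natCast, norm_one, one_mul]

theorem leadingCoeff_intMinPoly : (intMinPoly α).leadingCoeff = algDenom α := by
  have h := congrArg leadingCoeff (map_intMinPoly α)
  rw [leadingCoeff_map_of_injective (RingHom.injective_int _), leadingCoeff_mul, leadingCoeff_C,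
    ((minpoly.monic hα).map _).leadingCoeff, mul_one, eq_intCast] at h
  exact_mod_cast h

theorem intMinPoly_ne_zero : intMinPoly α ≠ 0 := by
  rw [← leadingCoeff_ne_zero, leadingCoeff_intMinPoly hα]
  exact_mod_cast (algDenom_spec α).1.ne'

theorem mem_roots_map_intMinPoly_mul_X_pow (k : ℕ) :
    α ∈ ((intMinPoly α * X ^ k).map (Int.castRingHom ℂ)).roots := by
  have hne : intMinPoly α * X ^ k ≠ 0 :=
    mul_ne_zero (intMinPoly_ne_zero hα) (pow_ne_zero k X_ne_zero)
  rw [mem_roots ((Polynomial.map_ne_zero_iff (RingHom.injective_int _)).mpr hne), IsRoot,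
    Polynomial.map_mul, eval_mul, map_intMinPoly, eval_mul, eval_map_algebraMap, minpoly.aeval,
    mul_zero, zero_mul]

theorem intMinPoly_mul_X_pow_mem_mahlerBox {D : ℕ} {B : ℝ} (hdeg : degAlg α ≤ D)
    (hM : _root_.mahlerMeasure α ≤ B) : intMinPoly α * X ^ (D - degAlg α) ∈ mahlerBox D B := by
  refine mem_mahlerBox ?_ ?_ ?_
  · rw [natDegree_mul_X_pow _ (intMinPoly_ne_zero hα), natDegree_intMinPoly]; omega
  · rw [leadingCoeff_mul_X_pow, leadingCoeff_intMinPoly hα]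
    exact_mod_cast (algDenom_spec α).1
  · rwa [Polynomial.map_mul, Polynomial.map_pow, map_X, mahlerMeasure_mul_X_pow,
      mahlerMeasure_map_intMinPoly hα]

theorem mahlerMeasure_le_exp_of_height_le {N : ℝ} (h : height α ≤ N) :
    _root_.mahlerMeasure α ≤ Real.exp (degAlg α * N) := by
  have hd : (0 : ℝ) < degAlg α := by exact_mod_cast minpoly.natDegree_pos hα
  have hM : 0 < _root_.mahlerMeasure α := by
    rw [← mahlerMeasure_map_intMinPoly hα]
    exact one_pos.trans_le (one_le_mahlerMeasure_of_ne_zero (intMinPoly_ne_zero hα))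
  rw [height, one_div, inv_mul_le_iff₀ hd] at h
  rw [← Real.exp_log hM]
  exact Real.exp_le_exp.mpr h

end IsIntegral

theorem E_card_upper_general (D : ℕ) (N : ℝ) (hN : 0 ≤ N) :
    ((setE D N).ncard : ℝ) ≤ Real.exp (D * (D + 1) * (N + 1)) := by
  set B := Real.exp (D * N)
  have hB : 1 ≤ B := Real.one_le_exp (by positivity)
  have hroot : ∀ α ∈ setE D N, ∃ p ∈ mahlerBox D B, α ∈ (p.map (Int.castRingHom ℂ)).roots := by
    rintro α ⟨hα, hdeg, hht⟩
    have hM : _root_.mahlerMeasure α ≤ B :=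
      (mahlerMeasure_le_exp_of_height_le hα.isIntegral hht).trans <|
        Real.exp_le_exp.mpr (mul_le_mul_of_nonneg_right (by exact_mod_cast hdeg) hN)
    exact ⟨_, intMinPoly_mul_X_pow_mem_mahlerBox hα.isIntegral hdeg hM,
      mem_roots_map_intMinPoly_mul_X_pow hα.isIntegral _⟩
  have hcount : (setE D N).ncard ≤ D * (mahlerBox D B).ncard :=
    ncard_le_mul_ncard_of_forall_mem_roots _ (finite_mahlerBox hB) (fun _ hp => hp.1) hroot
  calc ((setE D N).ncard : ℝ)
      ≤ D * (3 ^ D * 2 ^ (D * D) * B ^ (D + 1)) := by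
        refine (Nat.cast_le.mpr hcount).trans ?_
        push_cast
        gcongr
        exact ncard_mahlerBox_le hB
    _ = (D * 3 ^ D * 2 ^ (D * D)) * Real.exp (D * (D + 1) * N) := by
        rw [← Real.exp_nat_mul]; push_cast; ring_nf
    _ ≤ Real.exp (D * (D + 1)) * Real.exp (D * (D + 1) * N) := by
        gcongr; exact natCast_mul_three_pow_mul_two_pow_le_exp D
    _ = Real.exp (D * (D + 1) * (N + 1)) := by rw [← Real.exp_add]; ring_nf

theorem E_card_upper (D : ℕ) (hD : 1 ≤ D) (N : ℝ) (hN : 0 ≤ N) :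
    ((setE D N).ncard : ℝ) ≤ Real.exp (D * (D + 1) * (N + 1)) :=
  E_card_upper_general D N hN
end

section
/- There exists an entire function f, transcendental over ℂ[z], such that f(α) ∈ ℚ[α] for every algebraic number α. -/
/-!
Enumerate the algebraic numbers as `e 0, e 1, …` and let `h n` be a product of high powers of the
minimal polynomials of `e 0, …, e (n-1)`, so that `h K ∣ h n` for `K ≤ n` and `h n` vanishes at
`e k` for `k < n`. With small positive rationals `c n`, `f = ∑ c n * h n` is entire, and at `e k`
the series is a finite sum of rational polynomials in `e k`.

For transcendence, write `f = p N + h (N+1) * g N` with `p N` the `N`-th partial sum and `g N`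
entire. If `Q(z, f z) = 0`, then `Q(z, p N z) = (p N z - f z) * S z` is a polynomial divisible by
`h (N+1)` in the ring of entire functions; the exponents in `h` are chosen so that, for large `N`,
its degree is smaller than that of `h (N+1)`, so by Liouville it vanishes. Thus `Q` has the
infinitely many distinct roots `p N` and is zero.
-/

open Polynomial Polynomial.Bivariate Filter Topology Metric

namespace Polynomial

lemma eval_eval_eq_evalEval {R : Type*} [CommSemiring R] (Q : R[X][Y]) (p : R[X]) (z : R) :
    (Q.eval p).eval z = Q.evalEval z (p.eval z) := by
  rw [← coe_evalRingHom, eval, hom_eval₂, RingHom.comp_id, eval₂_evalRingHom]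

lemma natDegree_eval_le_add_mul {R : Type*} [Semiring R] (Q : R[X][Y]) (p : R[X]) {B : ℕ}
    (hB : ∀ j, (Q.coeff j).natDegree ≤ B) :
    (Q.eval p).natDegree ≤ B + Q.natDegree * p.natDegree := by
  rw [eval_eq_sum_range]
  refine natDegree_sum_le_of_forall_le _ _ fun j hj => natDegree_mul_le.trans ?_
  have hj : j ≤ Q.natDegree := Nat.lt_succ_iff.1 (Finset.mem_range.1 hj)
  grw [natDegree_pow_le, hB j, hj]

lemma natDegree_sum_range_succ_of_strictMono {R : Type*} [Semiring R] {φ : ℕ → R[X]}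
    (hφ : StrictMono fun n => (φ n).natDegree) (K : ℕ) :
    (∑ n ∈ Finset.range (K + 1), φ n).natDegree = (φ K).natDegree := by
  induction K with
  | zero => simp
  | succ K ih =>
    rw [Finset.sum_range_succ,
      natDegree_add_eq_right_of_natDegree_lt (ih.trans_lt (hφ K.lt_succ_self))]

/-- By Liouville's theorem: `g = r / h` is entire and tends to `0` at infinity. -/
lemma eq_zero_of_eval_eq_mul_of_degree_lt {r h : ℂ[X]} (hdeg : r.degree < h.degree)
    {g : ℂ → ℂ} (hg : Differentiable ℂ g) (hrh : ∀ z, r.eval z = h.eval z * g z) : r = 0 := by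
  have hg0 : Tendsto g (cocompact ℂ) (𝓝 0) := by
    rw [← Metric.cobounded_eq_cocompact]
    refine (isLittleO_cobounded_of_degree_lt hdeg).tendsto_div_nhds_zero.congr' ?_
    filter_upwards [(eventually_cofinite_not_isRoot (ne_zero_of_degree_gt hdeg)).filter_mono
      (Metric.cobounded_eq_cocompact (α := ℂ) ▸ cocompact_le_cofinite)] with z hz
    rw [hrh z, mul_div_cancel_left₀ _ hz]
  exact Polynomial.funext fun z => by simp [hrh, hg.apply_eq_of_tendsto_cocompact z hg0]

lemma exists_differentiable_evalEval_sub_eq_mul (Q : ℂ[X][Y]) {u v : ℂ → ℂ}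
    (hu : Differentiable ℂ u) (hv : Differentiable ℂ v) :
    ∃ S : ℂ → ℂ, Differentiable ℂ S ∧
      ∀ z, Q.evalEval z (u z) - Q.evalEval z (v z) = (u z - v z) * S z := by
  induction Q using Polynomial.induction_on' with
  | add Q₁ Q₂ h₁ h₂ =>
    obtain ⟨S₁, hS₁, e₁⟩ := h₁
    obtain ⟨S₂, hS₂, e₂⟩ := h₂
    refine ⟨S₁ + S₂, hS₁.add hS₂, fun z => ?_⟩
    simp only [evalEval_add, Pi.add_apply]
    linear_combination e₁ z + e₂ z
  | monomial n a =>
    refine ⟨fun z => a.eval z * ∑ i ∈ Finset.range n, u z ^ i * v z ^ (n - 1 - i),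
      a.differentiable.mul (Differentiable.fun_sum fun i _ => (hu.pow i).mul (hv.pow _)),
      fun z => ?_⟩
    simp only [evalEval, eval_monomial, eval_C, eval_mul, eval_pow]
    linear_combination -(a.eval z) * geom_sum₂_mul (u z) (v z) n

theorem eq_zero_of_forall_evalEval_eq_zero_of_approx {f : ℂ → ℂ} (hf : Differentiable ℂ f)
    {p h : ℕ → ℂ[X]}
    (happrox : ∀ N, ∃ g : ℂ → ℂ, Differentiable ℂ g ∧
      ∀ z, f z = (p N).eval z + (h N).eval z * g z)
    (hdeg : ∀ a b : ℕ, ∀ᶠ N in atTop, a + b * (p N).natDegree < (h N).natDegree)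
    (hp : Tendsto (fun N => (p N).natDegree) atTop atTop)
    {Q : ℂ[X][Y]} (hQ : ∀ z, Q.evalEval z (f z) = 0) : Q = 0 := by
  by_contra hQ0
  obtain ⟨B, hB⟩ : ∃ B, ∀ j, (Q.coeff j).natDegree ≤ B :=
    ⟨Q.support.sup fun j => (Q.coeff j).natDegree, fun j => by
      by_cases hj : j ∈ Q.support
      · exact Finset.le_sup (f := fun j => (Q.coeff j).natDegree) hj
      · simp [notMem_support_iff.1 hj]⟩
  have hroot : ∀ᶠ N in atTop, Q.IsRoot (p N) := by
    filter_upwards [hdeg B Q.natDegree] with N hN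
    obtain ⟨g, hg, hfg⟩ := happrox N
    obtain ⟨S, hS, hQS⟩ := exists_differentiable_evalEval_sub_eq_mul Q (p N).differentiable hf
    refine eq_zero_of_eval_eq_mul_of_degree_lt
      (degree_lt_degree ((natDegree_eval_le_add_mul Q (p N) hB).trans_lt hN)) (hg.mul hS).neg
      fun z => ?_
    calc (Q.eval (p N)).eval z = Q.evalEval z ((p N).eval z) - Q.evalEval z (f z) := by
          rw [hQ z, sub_zero, eval_eval_eq_evalEval]
      _ = (h N).eval z * -(g z * S z) := by rw [hQS z, hfg z]; ring
  obtain ⟨M, hM⟩ := ((finite_setOfPred_isRoot hQ0).image natDegree).bddAbove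
  obtain ⟨N, hN, hM'⟩ := (hroot.and (hp.eventually_gt_atTop M)).exists
  exact (hM ⟨_, hN, rfl⟩).not_gt hM'

end Polynomial

lemma summable_of_norm_le_of_norm_le_index {F : ℕ → ℂ → ℂ} {u : ℕ → ℝ} (hu : Summable u)
    (hF : ∀ (n : ℕ) z, ‖z‖ ≤ n → ‖F n z‖ ≤ u n) (z : ℂ) : Summable fun n => F n z :=
  .of_norm_bounded_eventually_nat hu <| (eventually_ge_atTop ⌈‖z‖⌉₊).mono fun n hn =>
    hF n z <| (Nat.le_ceil _).trans (by exact_mod_cast hn)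

lemma differentiable_tsum_of_norm_le_of_norm_le_index {F : ℕ → ℂ → ℂ} {u : ℕ → ℝ}
    (hu : Summable u) (hFd : ∀ n, Differentiable ℂ (F n))
    (hF : ∀ (n : ℕ) z, ‖z‖ ≤ n → ‖F n z‖ ≤ u n) :
    Differentiable ℂ fun z => ∑' n, F n z := by
  intro z₀
  obtain ⟨R, hR⟩ := exists_nat_gt ‖z₀‖
  have htail : DifferentiableOn ℂ (fun z => ∑' n, F (n + R) z) (ball 0 R) :=
    Complex.differentiableOn_tsum_of_summable_norm ((summable_nat_add_iff R).2 hu)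
      (fun n => (hFd _).differentiableOn) isOpen_ball fun n z hz => hF _ z <| by
        rw [mem_ball_zero_iff] at hz; push_cast; linarith [n.cast_nonneg (α := ℝ)]
  have hsplit : (fun z => ∑' n, F n z) =
      fun z => ∑ n ∈ Finset.range R, F n z + ∑' n, F (n + R) z :=
    funext fun z => ((summable_of_norm_le_of_norm_le_index hu hF z).sum_add_tsum_nat_add R).symm
  rw [hsplit]
  exact (Differentiable.fun_sum (fun n _ => hFd n) z₀).add
    (htail.differentiableAt (isOpen_ball.mem_nhds (mem_ball_zero_iff.2 hR)))

lemma exists_pos_rat_mul_le (M : ℝ) {ε : ℝ} (hε : 0 < ε) : ∃ c : ℚ, 0 < c ∧ c * M ≤ ε := by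
  obtain ⟨c, hc0, hc⟩ := exists_rat_btwn (div_pos hε (by positivity : 0 < |M| + 1))
  refine ⟨c, by exact_mod_cast hc0, ?_⟩
  rw [lt_div_iff₀ (by positivity)] at hc
  nlinarith [le_abs_self M]

lemma exists_pos_rat_forall_norm_mul_le {ι : Type*} {s : Set ℂ} (hs : IsCompact s)
    (t : Finset ι) {φ : ι → ℂ → ℂ} (hφ : ∀ i, Continuous (φ i)) {ε : ℝ} (hε : 0 < ε) :
    ∃ c : ℚ, 0 < c ∧ ∀ i ∈ t, ∀ z ∈ s, ‖(c : ℂ) * φ i z‖ ≤ ε := by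
  obtain ⟨M, hM⟩ := (hs.image (continuous_finsetSum t fun i _ => (hφ i).norm)).bddAbove
  obtain ⟨c, hc0, hcM⟩ := exists_pos_rat_mul_le M hε
  refine ⟨c, hc0, fun i hi z hz => ?_⟩
  have hle : ‖φ i z‖ ≤ M :=
    (Finset.single_le_sum (fun j _ => norm_nonneg (φ j z)) hi).trans (hM ⟨z, hz, rfl⟩)
  rw [norm_mul, Complex.norm_ratCast, abs_of_pos (by exact_mod_cast hc0)]
  exact (mul_le_mul_of_nonneg_left hle (by exact_mod_cast hc0.le)).trans hcM

section TailSum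

open Finset

variable {c : ℕ → ℂ} {h : ℕ → ℂ[X]}

/-- When `h K ∣ h n` for `n ≥ K`, this is `(∑_{n ≥ K} c n * h n) / h K`, computed termwise. -/
noncomputable def tailSum (c : ℕ → ℂ) (h : ℕ → ℂ[X]) (K : ℕ) (z : ℂ) : ℂ :=
  ∑' n, c (n + K) * (h (n + K) / h K).eval z

variable (hc : ∀ K n : ℕ, K ≤ n → ∀ z : ℂ, ‖z‖ ≤ n → ‖c n * (h n / h K).eval z‖ ≤ (1 / 2) ^ n)
include hc

lemma norm_tailSum_term_le (K n : ℕ) (z : ℂ) (hz : ‖z‖ ≤ n) :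
    ‖c (n + K) * (h (n + K) / h K).eval z‖ ≤ (1 / 2) ^ n :=
  (hc K (n + K) (Nat.le_add_left K n) z (hz.trans (by exact_mod_cast Nat.le_add_right n K))).trans
    (pow_le_pow_of_le_one (by norm_num) (by norm_num) (Nat.le_add_right n K))

lemma differentiable_tailSum (K : ℕ) : Differentiable ℂ (tailSum c h K) :=
  differentiable_tsum_of_norm_le_of_norm_le_index summable_geometric_two
    (fun _ => (Polynomial.differentiable _).const_mul _) (norm_tailSum_term_le hc K)

variable (hh : ∀ n, h n ≠ 0) (hdvd : ∀ K n, K ≤ n → h K ∣ h n)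
include hh hdvd

lemma tsum_eq_sum_add_mul_tailSum (K : ℕ) (z : ℂ) :
    ∑' n, c n * (h n).eval z =
      ∑ n ∈ range K, c n * (h n).eval z + (h K).eval z * tailSum c h K z := by
  have hterm : ∀ n, c (n + K) * (h (n + K)).eval z =
      (h K).eval z * (c (n + K) * (h (n + K) / h K).eval z) := fun n => by
    have hK := EuclideanDomain.mul_div_cancel' (hh K) (hdvd K (n + K) (Nat.le_add_left K n))
    calc c (n + K) * (h (n + K)).eval z = c (n + K) * (h K * (h (n + K) / h K)).eval z := by
          rw [hK]
      _ = _ := by rw [eval_mul]; ring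
  have hsum : Summable fun n => c (n + K) * (h (n + K)).eval z := by
    simp_rw [hterm]
    exact (summable_of_norm_le_of_norm_le_index summable_geometric_two
      (norm_tailSum_term_le hc K) z).mul_left _
  rw [← ((summable_nat_add_iff (f := fun n => c n * (h n).eval z) K).1 hsum).sum_add_tsum_nat_add K,
    tsum_congr hterm, tsum_mul_left, tailSum]

theorem differentiable_tsum_mul_eval : Differentiable ℂ fun z => ∑' n, c n * (h n).eval z := by
  have hsplit := funext (tsum_eq_sum_add_mul_tailSum hc hh hdvd 0)
  simp only [range_zero, sum_empty, zero_add] at hsplit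
  rw [hsplit]
  exact (h 0).differentiable.mul (differentiable_tailSum hc 0)

theorem eq_zero_of_forall_evalEval_tsum_mul_eval_eq_zero (hc0 : ∀ n, c n ≠ 0)
    (hgrow : ∀ n, (n + 1) * (1 + (h n).natDegree) ≤ (h (n + 1)).natDegree) {Q : ℂ[X][Y]}
    (hQ : ∀ z, Q.evalEval z (∑' n, c n * (h n).eval z) = 0) : Q = 0 := by
  have hD : StrictMono fun n => (h n).natDegree :=
    strictMono_nat_of_lt_succ fun n => by nlinarith [hgrow n]
  have hpdeg : ∀ N, (∑ n ∈ range (N + 1), C (c n) * h n).natDegree = (h N).natDegree :=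
    fun N => by
      rw [natDegree_sum_range_succ_of_strictMono (by simpa only [natDegree_C_mul (hc0 _)] using hD),
        natDegree_C_mul (hc0 N)]
  refine eq_zero_of_forall_evalEval_eq_zero_of_approx (differentiable_tsum_mul_eval hc hh hdvd)
    (p := fun N => ∑ n ∈ range (N + 1), C (c n) * h n) (h := fun N => h (N + 1))
    (fun N => ⟨tailSum c h (N + 1), differentiable_tailSum hc _, fun z => by
      simp [eval_finsetSum, tsum_eq_sum_add_mul_tailSum hc hh hdvd (N + 1) z]⟩)
    (fun a b => ?_) (by simpa only [hpdeg] using hD.tendsto_atTop) hQ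
  filter_upwards [eventually_ge_atTop (max a b)] with N hN
  rw [hpdeg]
  nlinarith [hgrow N, le_max_left a b, le_max_right a b]

end TailSum

section VanishingPoly

variable {K L : Type*} [Field K] [Field L] [Algebra K L]

noncomputable def vanishingPoly (e : ℕ → L) : ℕ → K[X]
  | 0 => 1
  | n + 1 => vanishingPoly e n * minpoly K (e n) ^ ((n + 1) * (1 + (vanishingPoly e n).natDegree))

variable (e : ℕ → L)

lemma vanishingPoly_dvd {m n : ℕ} (hmn : m ≤ n) :
    (vanishingPoly e m : K[X]) ∣ vanishingPoly e n := by
  induction n, hmn using Nat.le_induction with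
  | base => rfl
  | succ n _ ih => exact ih.trans (dvd_mul_right _ _)

lemma aeval_vanishingPoly {k n : ℕ} (hkn : k < n) :
    aeval (e k) (vanishingPoly e n : K[X]) = 0 := by
  refine aeval_eq_zero_of_dvd_aeval_eq_zero (vanishingPoly_dvd e hkn) ?_
  simp [vanishingPoly, minpoly.aeval]

variable {e} (he : ∀ n, IsIntegral K (e n))
include he

lemma vanishingPoly_ne_zero (n : ℕ) : (vanishingPoly e n : K[X]) ≠ 0 := by
  induction n with
  | zero => exact one_ne_zero
  | succ n ih => exact mul_ne_zero ih (pow_ne_zero _ (minpoly.ne_zero (he n)))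

lemma natDegree_vanishingPoly_succ_ge (n : ℕ) :
    (n + 1) * (1 + (vanishingPoly e n : K[X]).natDegree) ≤
      (vanishingPoly e (n + 1) : K[X]).natDegree := by
  rw [vanishingPoly,
    natDegree_mul (vanishingPoly_ne_zero he n) (pow_ne_zero _ (minpoly.ne_zero (he n))),
    natDegree_pow]
  exact (Nat.le_mul_of_pos_right _ (minpoly.natDegree_pos (he n))).trans (Nat.le_add_left _ _)

end VanishingPoly

lemma tsum_mul_aeval_mem_adjoin {R A : Type*} [CommSemiring R] [CommSemiring A]
    [TopologicalSpace A] [Algebra R A] {x : A} {c : ℕ → R} {H : ℕ → R[X]} {k : ℕ}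
    (hH : ∀ n, k < n → aeval x (H n) = 0) :
    ∑' n, algebraMap R A (c n) * aeval x (H n) ∈ Algebra.adjoin R {x} := by
  rw [tsum_eq_sum (s := Finset.range (k + 1)) fun n hn => by
    rw [hH n (by simpa using hn), mul_zero]]
  exact Subalgebra.sum_mem _ fun n _ =>
    Subalgebra.mul_mem _ (Subalgebra.algebraMap_mem _ _) (aeval_mem_adjoin_singleton _ _)

lemma MvPolynomial.eval_equivMvPolynomial {R : Type*} [CommSemiring R] (Q : R[X][Y]) (x y : R) :
    MvPolynomial.eval ![x, y] (Bivariate.equivMvPolynomial R Q) = Q.evalEval x y := by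
  have : (MvPolynomial.aeval ![x, y]).comp (Bivariate.equivMvPolynomial R).toAlgHom =
      aevalAeval x y := by
    ext <;> simp
  rw [← coe_aevalAeval_eq_evalEval, ← this]
  rfl

theorem exists_entire_transcendental_algebraic_values :
    ∃ f : ℂ → ℂ, Differentiable ℂ f ∧
      (∀ P : MvPolynomial (Fin 2) ℂ,
        (∀ z : ℂ, MvPolynomial.eval ![z, f z] P = 0) → P = 0) ∧
      ∀ α : ℂ, IsAlgebraic ℚ α → f α ∈ Algebra.adjoin ℚ ({α} : Set ℂ) := by
  obtain ⟨e, he⟩ := (Algebraic.countable ℚ ℂ).exists_eq_range ⟨0, isAlgebraic_zero⟩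
  have he_int : ∀ n, IsIntegral ℚ (e n) := fun n =>
    (he.symm.subset (Set.mem_range_self n) : IsAlgebraic ℚ (e n)).isIntegral
  set h : ℕ → ℂ[X] := fun n => (vanishingPoly e n).map (algebraMap ℚ ℂ)
  have hh : ∀ n, h n ≠ 0 := fun n => map_ne_zero (vanishingPoly_ne_zero he_int n)
  have hdvd : ∀ K n, K ≤ n → h K ∣ h n := fun K n hKn =>
    Polynomial.map_dvd (algebraMap ℚ ℂ) (vanishingPoly_dvd e hKn)
  have hgrow : ∀ n, (n + 1) * (1 + (h n).natDegree) ≤ (h (n + 1)).natDegree := fun n => by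
    simpa only [h, natDegree_map] using natDegree_vanishingPoly_succ_ge he_int n
  choose c hc_pos hc_small using fun n : ℕ => exists_pos_rat_forall_norm_mul_le
    (isCompact_closedBall (0 : ℂ) n) (Finset.range (n + 1)) (fun K => (h n / h K).continuous)
    (pow_pos (by norm_num : (0 : ℝ) < 1 / 2) n)
  have hbound : ∀ K n : ℕ, K ≤ n → ∀ z : ℂ, ‖z‖ ≤ n →
      ‖(c n : ℂ) * (h n / h K).eval z‖ ≤ (1 / 2) ^ n := fun K n hKn z hz =>
    hc_small n K (Finset.mem_range.2 (Nat.lt_succ_of_le hKn)) z (mem_closedBall_zero_iff.2 hz)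
  refine ⟨fun z => ∑' n, (c n : ℂ) * (h n).eval z, differentiable_tsum_mul_eval hbound hh hdvd,
    fun P hP => ?_, fun α hα => ?_⟩
  · have hQ := eq_zero_of_forall_evalEval_tsum_mul_eval_eq_zero hbound hh hdvd
      (fun n => by exact_mod_cast (hc_pos n).ne') hgrow
      (Q := (Bivariate.equivMvPolynomial ℂ).symm P)
      fun z => by rw [← MvPolynomial.eval_equivMvPolynomial, AlgEquiv.apply_symm_apply]; exact hP z
    simpa using hQ
  · obtain ⟨k, rfl⟩ := he.subset hα
    simpa [h, eval_map_algebraMap] using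
      tsum_mul_aeval_mem_adjoin (c := c) fun n hn => aeval_vanishingPoly (K := ℚ) e hn
end

section
/- An entire function that is not a polynomial is transcendental over ℂ[z]: if f is entire and there is a nonzero polynomial P ∈ ℂ[X,Y] with P(z, f(z)) = 0 for all z ∈ ℂ, then f is a polynomial (in fact f is algebraic of a very restricted type; for entire f this forces f polynomial). -/
/-!
Write `P` as a polynomial `∑ aᵢ(X) Yⁱ` in `Y` over `ℂ[X]`. For every `z`, `f z` is a root of
`∑ aᵢ(z) Yⁱ`, so Cauchy's bound gives `‖f z‖ ≤ 1 + ∑ ‖aᵢ(z)‖ / ‖aₙ(z)‖ = O(‖z‖ ^ m)` as `z → ∞`,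
because the leading coefficient `aₙ` stays away from `0` near infinity. An entire function of
polynomial growth is a polynomial: replacing `f` by its slope `(f z - f 0) / z` at `0` lowers the
exponent by one, and for exponent `0` this is Liouville's theorem.
-/

open Polynomial Asymptotics Bornology Filter

theorem Asymptotics.isBigO_const_pow_cobounded {R E : Type*} [NormedRing R] [NormMulClass R]
    [NormOneClass R] [Norm E] (c : E) (m : ℕ) : (fun _ : R => c) =O[cobounded R] (· ^ m) :=
  (isBigO_const_one R c _).trans
    (by simpa using isBigO_pow_pow_cobounded_of_le (R := R) (Nat.zero_le m))

theorem Asymptotics.IsBigO.dslope_zero {𝕜 E : Type*} [NontriviallyNormedField 𝕜]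
    [NormedAddCommGroup E] [NormedSpace 𝕜 E] {f : 𝕜 → E} {d : ℕ}
    (hf : f =O[cobounded 𝕜] (· ^ (d + 1))) : dslope f 0 =O[cobounded 𝕜] (· ^ d) := by
  refine ((isBigO_refl (·⁻¹) _).smul (hf.sub (isBigO_const_pow_cobounded (f 0) _))).congr' ?_ ?_
  · filter_upwards [eventually_ne_cobounded 0] with z hz
    rw [dslope_of_ne _ hz, slope_def_module, sub_zero]
  · filter_upwards [eventually_ne_cobounded 0] with z hz
    rw [smul_eq_mul, pow_succ', inv_mul_cancel_left₀ hz]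

theorem Differentiable.exists_polynomial_of_isBigO_pow {f : ℂ → ℂ} (hf : Differentiable ℂ f)
    {d : ℕ} (hd : f =O[cobounded ℂ] (· ^ d)) : ∃ p : ℂ[X], ∀ z, f z = p.eval z := by
  induction d generalizing f with
  | zero =>
    have hb : IsBounded (Set.range f) := by
      rw [hf.continuous.isBounded_range_iff_isBigO, ← Metric.cobounded_eq_cocompact]
      exact hd.trans (isBigO_of_le _ fun z => by simp)
    obtain ⟨c, hc⟩ := hf.exists_eq_const_of_bounded hb
    exact ⟨C c, fun z => by simp [hc]⟩
  | succ d ih =>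
    have hg : Differentiable ℂ (dslope f 0) := by
      simpa [differentiableOn_univ] using
        (Complex.differentiableOn_dslope (s := Set.univ) univ_mem).mpr hf.differentiableOn
    obtain ⟨p, hp⟩ := ih hg hd.dslope_zero
    refine ⟨C (f 0) + X * p, fun z => ?_⟩
    have hslope := sub_smul_dslope f 0 z
    rw [sub_zero, smul_eq_mul, hp] at hslope
    rw [eval_add, eval_mul, eval_C, eval_X, hslope, add_sub_cancel]

namespace Polynomial

theorem cauchyBound_le_sum_div {D : Type*} [NormedDivisionRing D] (p : D[X]) :
    (cauchyBound p : ℝ) ≤ (∑ i ∈ Finset.range p.natDegree, ‖p.coeff i‖) / ‖p.leadingCoeff‖ + 1 := by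
  have hsup : (Finset.range p.natDegree).sup (fun i => ‖p.coeff i‖₊) ≤
      ∑ i ∈ Finset.range p.natDegree, ‖p.coeff i‖₊ :=
    Finset.sup_le fun i hi =>
      Finset.single_le_sum (f := fun i => ‖p.coeff i‖₊) (fun _ _ => zero_le) hi
  rw [cauchyBound, NNReal.coe_add, NNReal.coe_div, NNReal.coe_one, coe_nnnorm]
  gcongr
  exact (NNReal.coe_le_coe.mpr hsup).trans_eq (NNReal.coe_sum ..)

section NormedField

variable {K : Type*} [NormedField K]

theorem eventually_cobounded_eval_ne_zero {p : K[X]} (hp : p ≠ 0) :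
    ∀ᶠ z in cobounded K, p.eval z ≠ 0 :=
  (eventually_cofinite_not_isRoot hp).filter_mono
    (le_cofinite_iff_eventually_ne.mpr eventually_ne_cobounded)

theorem isBigO_cobounded_pow_of_natDegree_le {p : K[X]} {m : ℕ} (hp : p.natDegree ≤ m) :
    p.eval =O[cobounded K] (· ^ m) :=
  (isBigO_cobounded_of_degree_le (Q := X ^ m)
    (by rw [degree_X_pow]; exact degree_le_of_natDegree_le hp)).congr_right (by simp)

theorem isBigO_cobounded_inv_eval {p : K[X]} (hp : p ≠ 0) :
    (fun z => (p.eval z)⁻¹) =O[cobounded K] (fun _ => (1 : K)) := by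
  have h : (fun _ => (1 : K)) =O[cobounded K] p.eval :=
    (isBigO_cobounded_of_degree_le (P := C 1) (by simpa using zero_le_degree_iff.mpr hp)).congr_left
      (by simp)
  simpa using h.inv_rev (by simp)

theorem isBigO_cobounded_cauchyBound_map_evalRingHom {Q : K[X][X]} (hQ : Q ≠ 0) {m : ℕ}
    (hm : ∀ i, (Q.coeff i).natDegree ≤ m) :
    (fun z => (cauchyBound (Q.map (evalRingHom z)) : ℝ)) =O[cobounded K] (· ^ m) := by
  have hsum : (fun z => ∑ i ∈ Finset.range Q.natDegree, ‖(Q.coeff i).eval z‖)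
      =O[cobounded K] (· ^ m) :=
    IsBigO.fun_sum fun i _ => (isBigO_cobounded_pow_of_natDegree_le (hm i)).norm_left
  have hinv := (isBigO_cobounded_inv_eval (leadingCoeff_ne_zero.mpr hQ)).norm_left
  have hbound := ((hsum.mul hinv).congr_right fun z => mul_one _).add
    (isBigO_const_pow_cobounded (1 : ℝ) m)
  refine (IsBigO.of_bound' ?_).trans hbound
  filter_upwards [eventually_cobounded_eval_ne_zero (leadingCoeff_ne_zero.mpr hQ)] with z hz
  have hlc : evalRingHom z Q.leadingCoeff ≠ 0 := hz
  have key := cauchyBound_le_sum_div (Q.map (evalRingHom z))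
  rw [natDegree_map_of_leadingCoeff_ne_zero _ hlc, leadingCoeff_map_of_leadingCoeff_ne_zero _ hlc]
    at key
  simp only [coeff_map, coe_evalRingHom, div_eq_mul_inv, ← norm_inv] at key
  rwa [Real.norm_of_nonneg (by positivity), Real.norm_of_nonneg (by positivity)]

theorem exists_isBigO_pow_of_isRoot_map_evalRingHom {Q : K[X][X]} (hQ : Q ≠ 0) {f : K → K}
    (hf : ∀ z, (Q.map (evalRingHom z)).IsRoot (f z)) : ∃ m : ℕ, f =O[cobounded K] (· ^ m) := by
  refine ⟨Q.support.sup fun i => (Q.coeff i).natDegree, IsBigO.trans ?_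
    (isBigO_cobounded_cauchyBound_map_evalRingHom hQ fun i => ?_)⟩
  · refine IsBigO.of_bound' ?_
    filter_upwards [eventually_cobounded_eval_ne_zero (leadingCoeff_ne_zero.mpr hQ)] with z hz
    have hQz : Q.map (evalRingHom z) ≠ 0 := by
      intro h
      have hlc := leadingCoeff_map_of_leadingCoeff_ne_zero (evalRingHom z) hz
      rw [h, leadingCoeff_zero] at hlc
      exact hz hlc.symm
    rw [NNReal.norm_eq]
    exact_mod_cast ((hf z).norm_lt_cauchyBound hQz).le
  · by_cases hi : i ∈ Q.support
    · exact Finset.le_sup (f := fun i => (Q.coeff i).natDegree) hi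
    · simp [notMem_support_iff.mp hi]

end NormedField

section Bivariate

variable {R : Type*} [CommRing R]

-- `MvPolynomial.aeval ![C X, X]` reads `P(X, Y)` as a polynomial in `Y` over `R[X]`.
theorem eval_map_evalRingHom_aeval (P : MvPolynomial (Fin 2) R) (z w : R) :
    ((MvPolynomial.aeval (![C X, X] : Fin 2 → R[X][X]) P).map (evalRingHom z)).eval w =
      MvPolynomial.eval ![z, w] P := by
  induction P using MvPolynomial.induction_on with
  | C a => simp
  | add p q hp hq => simp [hp, hq]
  | mul_X p i hp => fin_cases i <;> simp [hp]

theorem aeval_C_X_X_injective [IsDomain R] [Infinite R] :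
    Function.Injective (MvPolynomial.aeval ![C X, X] : MvPolynomial (Fin 2) R →ₐ[R] R[X][X]) := by
  refine (injective_iff_map_eq_zero _).mpr fun P hP => MvPolynomial.funext fun x => ?_
  rw [show x = ![x 0, x 1] from by ext i; fin_cases i <;> rfl, ← eval_map_evalRingHom_aeval, hP]
  simp

end Bivariate

end Polynomial

theorem entire_algebraic_is_polynomial (f : ℂ → ℂ) (hf : Differentiable ℂ f)
    (P : MvPolynomial (Fin 2) ℂ) (hP : P ≠ 0)
    (hvan : ∀ z : ℂ, MvPolynomial.eval ![z, f z] P = 0) :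
    ∃ p : Polynomial ℂ, ∀ z : ℂ, f z = p.eval z := by
  set Q : ℂ[X][X] := MvPolynomial.aeval ![C X, X] P
  have hQ : Q ≠ 0 := (map_ne_zero_iff _ aeval_C_X_X_injective).mpr hP
  have hroot : ∀ z, (Q.map (evalRingHom z)).IsRoot (f z) := fun z => by
    rw [IsRoot, eval_map_evalRingHom_aeval]
    exact hvan z
  obtain ⟨m, hm⟩ := exists_isBigO_pow_of_isRoot_map_evalRingHom hQ hroot
  exact hf.exists_polynomial_of_isBigO_pow hm
end

section
/- Let 0 < r < R ≤ ∞, let F be holomorphic on the open disc of radius R, and suppose F vanishes at s distinct points of the closed disc of radius r. Then for every z with |z| ≤ r, |F(z)| ≤ |F|_{R'} · ((2rR')/(R'^2 + r^2))^{s} for any r < R' < R, where |F|_{R'} = sup_{|w| = R'} |F(w)|. In particular, log|F(z)| ≤ log|F|_{R'} − c_0 s with c_0 = log((R'^2 + r^2)/(2rR')) > 0. -/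
/-!
Divide out the zeros one at a time by Blaschke factors `b(w) = ρ (w - a) / (ρ² - ā w)`.
By the identity `|ρ² - ā w|² - ρ² |w - a|² = (ρ² - |a|²)(ρ² - |w|²)`, such a factor has modulus
one on `|w| = ρ` and modulus at most `2rρ / (ρ² + r²)` on `|w| ≤ r` when `|a| ≤ r`. So each
division preserves the maximum of `|F|` on the circle of radius `ρ` while costing that factor
inside the disc of radius `r`, and the maximum modulus principle bounds what remains.
-/

open Metric Complex ComplexConjugate

noncomputable def blaschke (ρ : ℝ) (a w : ℂ) : ℂ :=
  ρ * (w - a) / ((ρ : ℂ) ^ 2 - conj a * w)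

section

variable {ρ r : ℝ} {a w z : ℂ} {F : ℂ → ℂ}

theorem sq_norm_sq_sub_conj_mul (ρ : ℝ) (a w : ℂ) :
    ‖(ρ : ℂ) ^ 2 - conj a * w‖ ^ 2 =
      ρ ^ 2 * ‖w - a‖ ^ 2 + (ρ ^ 2 - ‖a‖ ^ 2) * (ρ ^ 2 - ‖w‖ ^ 2) := by
  simp only [Complex.sq_norm, normSq_apply]
  simp only [sub_re, sub_im, mul_re, mul_im, conj_re, conj_im, ← ofReal_pow, ofReal_re, ofReal_im]
  ring

theorem sq_sub_conj_mul_ne_zero (ha : ‖a‖ < ρ) (hw : ‖w‖ ≤ ρ) :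
    (ρ : ℂ) ^ 2 - conj a * w ≠ 0 := by
  have hρ : 0 < ρ := (norm_nonneg a).trans_lt ha
  have hlt : ‖conj a * w‖ < ‖(ρ : ℂ) ^ 2‖ := by
    rw [norm_mul, norm_conj, norm_pow, norm_real, Real.norm_of_nonneg hρ.le, sq]
    exact mul_lt_mul_of_lt_of_le_of_nonneg_of_pos ha hw (norm_nonneg a) hρ
  exact sub_ne_zero.2 fun h => hlt.ne (by rw [h])

theorem blaschke_ne_zero (ha : ‖a‖ < ρ) (hw : ‖w‖ ≤ ρ) (hwa : w ≠ a) : blaschke ρ a w ≠ 0 :=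
  div_ne_zero (mul_ne_zero (ofReal_ne_zero.2 ((norm_nonneg a).trans_lt ha).ne')
    (sub_ne_zero.2 hwa)) (sq_sub_conj_mul_ne_zero ha hw)

theorem norm_blaschke_of_mem_sphere (ha : ‖a‖ < ρ) (hw : w ∈ sphere 0 ρ) :
    ‖blaschke ρ a w‖ = 1 := by
  rw [mem_sphere_zero_iff_norm] at hw
  have hρ : ρ ≠ 0 := ((norm_nonneg a).trans_lt ha).ne'
  have hwa : ‖w - a‖ ≠ 0 := norm_ne_zero_iff.2 (sub_ne_zero.2 (by rintro rfl; exact ha.ne hw))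
  have hdenom : (ρ : ℂ) ^ 2 - conj a * w = conj (w - a) * w := by
    rw [map_sub, sub_mul, ← normSq_eq_conj_mul_self, ← ofReal_pow, ← Complex.sq_norm, hw]
  rw [blaschke, hdenom, norm_div, norm_mul, norm_mul, norm_conj, norm_real, hw,
    Real.norm_of_nonneg (hw ▸ norm_nonneg w)]
  field_simp

theorem norm_blaschke_le (ha : ‖a‖ ≤ r) (hw : ‖w‖ ≤ r) (hrρ : r < ρ) :
    ‖blaschke ρ a w‖ ≤ 2 * r * ρ / (ρ ^ 2 + r ^ 2) := by
  have hr : 0 ≤ r := (norm_nonneg a).trans ha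
  have hρ : 0 < ρ := hr.trans_lt hrρ
  set d := ‖(ρ : ℂ) ^ 2 - conj a * w‖
  have hd : 0 < d := norm_pos_iff.2 (sq_sub_conj_mul_ne_zero (ha.trans_lt hrρ) (hw.trans hrρ.le))
  have hd_le : d ^ 2 ≤ (ρ ^ 2 + r ^ 2) ^ 2 := by
    refine pow_le_pow_left₀ hd.le ((norm_sub_le _ _).trans (add_le_add ?_ ?_)) 2
    · rw [norm_pow, norm_real, Real.norm_of_nonneg hρ.le]
    · rw [norm_mul, norm_conj, sq]
      exact mul_le_mul ha hw (norm_nonneg w) hr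
  have hd_ge : ρ ^ 2 * ‖w - a‖ ^ 2 + (ρ ^ 2 - r ^ 2) ^ 2 ≤ d ^ 2 := by
    rw [sq_norm_sq_sub_conj_mul]
    have := pow_le_pow_left₀ (norm_nonneg a) ha 2
    have := pow_le_pow_left₀ (norm_nonneg w) hw 2
    have := pow_le_pow_left₀ hr hrρ.le 2
    nlinarith
  rw [blaschke, norm_div, norm_mul, norm_real, Real.norm_of_nonneg hρ.le,
    div_le_div_iff₀ hd (by positivity)]
  refine le_of_sq_le_sq ?_ (by positivity)
  -- `(ρ² + r²)² - (2 r ρ)² = (ρ² - r²)²`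
  nlinarith [mul_le_mul_of_nonneg_right hd_ge (sq_nonneg (ρ ^ 2 + r ^ 2)),
    mul_le_mul_of_nonneg_left hd_le (sq_nonneg (ρ ^ 2 - r ^ 2))]

theorem exists_eq_blaschke_mul (hF : DiffContOnCl ℂ F (ball 0 ρ)) (ha : ‖a‖ < ρ)
    (hFa : F a = 0) :
    ∃ G : ℂ → ℂ, DiffContOnCl ℂ G (ball 0 ρ) ∧
      ∀ w ∈ closedBall (0 : ℂ) ρ, F w = blaschke ρ a w * G w := by
  have ha_mem : a ∈ ball (0 : ℂ) ρ := mem_ball_zero_iff.2 ha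
  have hdenom : Continuous fun w : ℂ => (ρ : ℂ) ^ 2 - conj a * w := by fun_prop
  refine ⟨fun w => dslope F a w * ((ρ : ℂ) ^ 2 - conj a * w) / ρ, ?_, fun w hw => ?_⟩
  · refine DiffContOnCl.mk_ball ?_ ?_
    · exact (((differentiableOn_dslope (isOpen_ball.mem_nhds ha_mem)).2
        hF.differentiableOn).mul (by fun_prop)).div_const _
    · exact (((continuousOn_dslope (closedBall_mem_nhds_of_mem ha_mem)).2
        ⟨hF.continuousOn_ball, hF.differentiableAt isOpen_ball ha_mem⟩).mul
        hdenom.continuousOn).div_const _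
  · have hd := sq_sub_conj_mul_ne_zero ha (mem_closedBall_zero_iff.1 hw)
    have hρ : (ρ : ℂ) ≠ 0 := ofReal_ne_zero.2 ((norm_nonneg a).trans_lt ha).ne'
    have hFw := sub_smul_dslope F a w
    rw [hFa, sub_zero, smul_eq_mul] at hFw
    rw [← hFw, blaschke, eq_comm, div_mul_div_comm, div_eq_iff (mul_ne_zero hd hρ)]
    ring

theorem norm_le_sSup_norm_sphere (hF : DiffContOnCl ℂ F (ball 0 ρ)) (hρ : 0 < ρ)
    (hz : ‖z‖ ≤ ρ) : ‖F z‖ ≤ sSup ((fun w => ‖F w‖) '' sphere 0 ρ) := by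
  have hbdd : BddAbove ((fun w => ‖F w‖) '' sphere 0 ρ) :=
    (isCompact_sphere 0 ρ).bddAbove_image
      (hF.continuousOn_ball.mono sphere_subset_closedBall).norm
  refine Complex.norm_le_of_forall_mem_frontier_norm_le isBounded_ball hF (fun w hw => ?_) ?_
  · rw [frontier_ball 0 hρ.ne'] at hw
    exact le_csSup hbdd (Set.mem_image_of_mem _ hw)
  · rwa [closure_ball 0 hρ.ne', mem_closedBall_zero_iff]

theorem norm_le_sSup_norm_sphere_mul_pow_card (hF : DiffContOnCl ℂ F (ball 0 ρ)) (hrρ : r < ρ)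
    {S : Finset ℂ} (hS : ↑S ⊆ closedBall (0 : ℂ) r) (hzero : ∀ a ∈ S, F a = 0) (hz : ‖z‖ ≤ r) :
    ‖F z‖ ≤ sSup ((fun w => ‖F w‖) '' sphere 0 ρ) * (2 * r * ρ / (ρ ^ 2 + r ^ 2)) ^ S.card := by
  have hr : 0 ≤ r := (norm_nonneg z).trans hz
  have hzρ : z ∈ closedBall (0 : ℂ) ρ := mem_closedBall_zero_iff.2 (hz.trans hrρ.le)
  induction S using Finset.induction_on generalizing F with
  | empty => simpa using norm_le_sSup_norm_sphere hF (hr.trans_lt hrρ) (hz.trans hrρ.le)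
  | @insert a S haS ih =>
    rw [Finset.coe_insert, Set.insert_subset_iff, mem_closedBall_zero_iff] at hS
    obtain ⟨har, hS⟩ := hS
    obtain ⟨G, hG, hFG⟩ :=
      exists_eq_blaschke_mul hF (har.trans_lt hrρ) (hzero a (Finset.mem_insert_self a S))
    have hsup : (fun w => ‖G w‖) '' sphere 0 ρ = (fun w => ‖F w‖) '' sphere 0 ρ := by
      refine Set.image_congr fun w hw => ?_
      rw [hFG w (sphere_subset_closedBall hw), norm_mul,
        norm_blaschke_of_mem_sphere (har.trans_lt hrρ) hw, one_mul]
    have hGzero : ∀ b ∈ S, G b = 0 := by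
      intro b hb
      have hbr : ‖b‖ ≤ r := mem_closedBall_zero_iff.1 (hS hb)
      have hFb := hzero b (Finset.mem_insert_of_mem hb)
      rw [hFG b (mem_closedBall_zero_iff.2 (hbr.trans hrρ.le))] at hFb
      exact (mul_eq_zero.1 hFb).resolve_left <| blaschke_ne_zero (har.trans_lt hrρ)
        (hbr.trans hrρ.le) (by rintro rfl; exact haS hb)
    calc ‖F z‖ = ‖blaschke ρ a z‖ * ‖G z‖ := by rw [hFG z hzρ, norm_mul]
      _ ≤ 2 * r * ρ / (ρ ^ 2 + r ^ 2) *
          (sSup ((fun w => ‖G w‖) '' sphere 0 ρ) * (2 * r * ρ / (ρ ^ 2 + r ^ 2)) ^ S.card) :=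
        mul_le_mul (norm_blaschke_le har hz hrρ) (ih hG hS hGzero) (norm_nonneg _)
          ((norm_nonneg _).trans (norm_blaschke_le har hz hrρ))
      _ = sSup ((fun w => ‖F w‖) '' sphere 0 ρ) *
          (2 * r * ρ / (ρ ^ 2 + r ^ 2)) ^ (insert a S).card := by
        rw [hsup, Finset.card_insert_of_notMem haS, pow_succ]
        ring

end

theorem schwarz_many_zeros_general (r R : ℝ) (F : ℂ → ℂ)
    (hF : DifferentiableOn ℂ F (Metric.ball (0 : ℂ) R))
    (S : Finset ℂ) (hS : ↑S ⊆ Metric.closedBall (0 : ℂ) r)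
    (hzero : ∀ a ∈ S, F a = 0) :
    ∀ R' : ℝ, r < R' → R' < R → ∀ z : ℂ, ‖z‖ ≤ r →
      ‖F z‖ ≤
        (sSup ((fun w => ‖F w‖) '' Metric.sphere (0 : ℂ) R')) *
          ((2 * r * R') / (R' ^ 2 + r ^ 2)) ^ S.card := fun _ hrR' hR'R _ hz =>
  norm_le_sSup_norm_sphere_mul_pow_card (hF.diffContOnCl_ball (closedBall_subset_ball hR'R))
    hrR' hS hzero hz

theorem schwarz_many_zeros (r R : ℝ) (hr : 0 < r) (hrR : r < R) (F : ℂ → ℂ)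
    (hF : DifferentiableOn ℂ F (Metric.ball (0 : ℂ) R))
    (S : Finset ℂ) (hS : ↑S ⊆ Metric.closedBall (0 : ℂ) r)
    (hzero : ∀ a ∈ S, F a = 0) :
    ∀ R' : ℝ, r < R' → R' < R → ∀ z : ℂ, ‖z‖ ≤ r →
      ‖F z‖ ≤
        (sSup ((fun w => ‖F w‖) '' Metric.sphere (0 : ℂ) R')) *
          ((2 * r * R') / (R' ^ 2 + r ^ 2)) ^ S.card :=
  schwarz_many_zeros_general r R F hF S hS hzero
end
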